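/- Let X and B be rational functions (viewed as generating subfields of the rational function field ℂ(z)) such that the subfield ℂ(X, B) generated by X and B equals all of ℂ(z). Then for all but finitely many points z₀ ∈ ℂ, the image set B(X⁻¹{z₀}) contains exactly deg X distinct points. -/

import Mathlib

open Polynomial OnePoint

/-- The Riemann sphere, modeled as the one-point compactification of `ℂ`. -/
abbrev CP1 := OnePoint ℂ

/-- Extension of a rational function to a self-map of the Riemann sphere. -/
noncomputable def RatFunc.toCP1 (f : RatFunc ℂ) : CP1 → CP1 :=
  fun z =>
    Option.rec
      (if f.num.natDegree > f.denom.natDegree then (∞ : CP1)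
       else if f.num.natDegree < f.denom.natDegree then ((0 : ℂ) : CP1)
       else ((f.num.leadingCoeff / f.denom.leadingCoeff : ℂ) : CP1))
      (fun a => if f.denom.eval a = 0 then (∞ : CP1)
                else ((f.num.eval a / f.denom.eval a : ℂ) : CP1))
      (z : Option ℂ)

/-- The degree of a rational function, as a branched covering of the sphere. -/
noncomputable def RatFunc.deg (f : RatFunc ℂ) : ℕ :=
  max f.num.natDegree f.denom.natDegree

namespace Stmt0Aux

lemma toCP1_coe (f : RatFunc ℂ) (a : ℂ) :
    f.toCP1 (a : CP1) = if f.denom.eval a = 0 then (∞ : CP1)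
      else ((f.num.eval a / f.denom.eval a : ℂ) : CP1) := rfl

lemma toCP1_infty (f : RatFunc ℂ) :
    f.toCP1 (∞ : CP1) = if f.num.natDegree > f.denom.natDegree then (∞ : CP1)
       else if f.num.natDegree < f.denom.natDegree then ((0 : ℂ) : CP1)
       else ((f.num.leadingCoeff / f.denom.leadingCoeff : ℂ) : CP1) := rfl

lemma ratfunc_eval_id (f : RatFunc ℂ) (a : ℂ) :
    f.eval (RingHom.id ℂ) a = f.num.eval a / f.denom.eval a := rfl

/-- The Wronskian of numerator and denominator. -/
noncomputable def wron (X : RatFunc ℂ) : ℂ[X] :=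
  X.num.derivative * X.denom - X.num * X.denom.derivative

lemma dvd_deriv_aux {u : ℂ[X]} (h : u ∣ u.derivative) : u.natDegree = 0 := by
  by_contra hn
  have hd0 : u.derivative ≠ 0 := fun h0 => hn (natDegree_eq_zero_of_derivative_eq_zero h0)
  exact absurd (Polynomial.natDegree_le_of_dvd h hd0)
    (not_le.mpr (Polynomial.natDegree_derivative_lt hn))

lemma wron_ne_zero {X : RatFunc ℂ} (hX : 1 ≤ X.deg) : wron X ≠ 0 := by
  intro h
  have h1 : X.num.derivative * X.denom = X.num * X.denom.derivative :=
    sub_eq_zero.mp (show X.num.derivative * X.denom - X.num * X.denom.derivative = 0 from h)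
  have hco := X.isCoprime_num_denom
  have hnum : X.num.natDegree = 0 := by
    apply dvd_deriv_aux
    exact hco.dvd_of_dvd_mul_right ⟨X.denom.derivative, h1⟩
  have hden : X.denom.natDegree = 0 := by
    apply dvd_deriv_aux
    refine hco.symm.dvd_of_dvd_mul_right ⟨X.num.derivative, ?_⟩
    rw [mul_comm X.denom.derivative X.num, ← h1, mul_comm]
  have : X.deg = 0 := by
    show max X.num.natDegree X.denom.natDegree = 0
    omega
  omega


lemma eval_ne_of_dvd {f g h : ℂ[X]} (hdvd : f ∣ g * h) {a : ℂ}
    (hg : g.eval a ≠ 0) (hh : h.eval a ≠ 0) : f.eval a ≠ 0 := by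
  obtain ⟨k, hk⟩ := hdvd
  intro h0
  have := congrArg (Polynomial.eval a) hk
  simp only [Polynomial.eval_mul, h0, zero_mul] at this
  exact mul_ne_zero hg hh this

lemma good (X B : RatFunc ℂ) (hX : 1 ≤ X.deg)
    (p q : RatFunc ℂ)
    (hp : p ∈ Algebra.adjoin ℂ ({X, B} : Set (RatFunc ℂ)))
    (hq : q ∈ Algebra.adjoin ℂ ({X, B} : Set (RatFunc ℂ)))
    (hq0 : q ≠ 0)
    (hzpq : (RatFunc.X : RatFunc ℂ) * q = p)
    (z₀ : ℂ) (h0 : z₀ ≠ 0)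
    (hrat : z₀ ≠ X.num.leadingCoeff / X.denom.leadingCoeff)
    (him : ∀ t : ℂ, ((wron X).eval t = 0 ∨ B.denom.eval t = 0 ∨ q.num.eval t = 0) →
      z₀ ≠ X.num.eval t / X.denom.eval t) :
    (B.toCP1 '' (X.toCP1 ⁻¹' {((z₀ : ℂ) : CP1)})).ncard = X.deg := by
  have hvne : X.denom ≠ 0 := X.denom_ne_zero
  have hco := X.isCoprime_num_denom
  set P : ℂ[X] := X.num - Polynomial.C z₀ * X.denom with hP
  have hPeval : ∀ a : ℂ, P.eval a = X.num.eval a - z₀ * X.denom.eval a := by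
    intro a; simp [hP]
  -- clean roots
  have hclean : ∀ a : ℂ, P.eval a = 0 → X.denom.eval a ≠ 0 := by
    intro a hPa hva
    have hua : X.num.eval a = 0 := by
      have := hPeval a
      rw [hva, mul_zero, sub_zero] at this
      rw [← this, hPa]
    obtain ⟨c, d, hcd⟩ := hco
    have := congrArg (Polynomial.eval a) hcd
    simp [hua, hva] at this
  have hval : ∀ a : ℂ, P.eval a = 0 → X.num.eval a / X.denom.eval a = z₀ := by
    intro a hPa
    have hva := hclean a hPa
    have h1 : X.num.eval a = z₀ * X.denom.eval a := by
      have := hPeval a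
      rw [hPa] at this
      have := this.symm
      rwa [sub_eq_zero] at this
    rw [h1]
    field_simp
  have hT : ∀ a : ℂ, P.eval a = 0 →
      (wron X).eval a ≠ 0 ∧ B.denom.eval a ≠ 0 ∧ q.num.eval a ≠ 0 := by
    intro a hPa
    have : ¬((wron X).eval a = 0 ∨ B.denom.eval a = 0 ∨ q.num.eval a = 0) := by
      intro hor
      exact him a hor (hval a hPa).symm
    push_neg at this
    exact this
  -- degree
  have hdegX : X.deg = max X.num.natDegree X.denom.natDegree := rfl
  have hdeg : P.natDegree = X.deg := by
    rcases lt_trichotomy X.denom.natDegree X.num.natDegree with h | h | h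
    · have h1 : (Polynomial.C z₀ * X.denom).natDegree < X.num.natDegree :=
        lt_of_le_of_lt (natDegree_C_mul_le _ _) h
      rw [hP, natDegree_sub_eq_left_of_natDegree_lt h1, hdegX, max_eq_left h.le]
    · have hvl : X.denom.leadingCoeff ≠ 0 := leadingCoeff_ne_zero.mpr hvne
      have hc : P.coeff X.denom.natDegree ≠ 0 := by
        have e1 : P.coeff X.denom.natDegree =
            X.num.coeff X.denom.natDegree - z₀ * X.denom.coeff X.denom.natDegree := by
          simp [hP]
        rw [e1, h, Polynomial.coeff_natDegree, ← h, Polynomial.coeff_natDegree]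
        intro hzero
        apply hrat
        rw [eq_div_iff hvl]
        rw [sub_eq_zero] at hzero
        exact hzero.symm
      have hle : P.natDegree ≤ X.denom.natDegree := by
        refine le_trans (natDegree_sub_le _ _) ?_
        simp only [max_le_iff]
        exact ⟨h.ge, natDegree_C_mul_le _ _⟩
      have := le_natDegree_of_ne_zero hc
      rw [hdegX, ← h, max_self]
      omega
    · have hz : (Polynomial.C z₀ * X.denom).natDegree = X.denom.natDegree :=
        natDegree_C_mul h0
      have h1 : X.num.natDegree < (Polynomial.C z₀ * X.denom).natDegree := hz ▸ h
      rw [hP, natDegree_sub_eq_right_of_natDegree_lt h1, hz, hdegX, max_eq_right h.le]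
  have hPne : P ≠ 0 := by
    intro h
    rw [h, natDegree_zero] at hdeg
    omega
  -- separability
  have hsep : P.Separable := by
    rw [Polynomial.separable_def,
      Polynomial.isCoprime_iff_aeval_ne_zero_of_isAlgClosed (k := ℂ) ℂ P (derivative P)]
    intro a
    by_contra hcon
    push_neg at hcon
    obtain ⟨hPa, hP'a⟩ := hcon
    rw [show (aeval a) P = P.eval a by simp [Polynomial.aeval_def]] at hPa
    rw [show (aeval a) P.derivative = P.derivative.eval a by
      simp [Polynomial.aeval_def]] at hP'a
    have hva := hclean a hPa
    have h1 : X.num.eval a = z₀ * X.denom.eval a := by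
      have := hPeval a
      rw [hPa] at this
      have := this.symm
      rwa [sub_eq_zero] at this
    have h2 : X.num.derivative.eval a = z₀ * X.denom.derivative.eval a := by
      have hD : P.derivative = X.num.derivative - Polynomial.C z₀ * X.denom.derivative := by
        simp [hP]
      have := congrArg (Polynomial.eval a) hD
      rw [hP'a] at this
      simp only [Polynomial.eval_sub, Polynomial.eval_mul, Polynomial.eval_C] at this
      have := this.symm
      rwa [sub_eq_zero] at this
    have hw : (wron X).eval a = 0 := by
      simp only [wron, Polynomial.eval_sub, Polynomial.eval_mul, h1, h2]
      ring
    exact (hT a hPa).1 hw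
  -- fiber description
  have hfiber : X.toCP1 ⁻¹' {((z₀ : ℂ) : CP1)} =
      (fun a : ℂ => (a : CP1)) '' {a : ℂ | P.eval a = 0} := by
    ext w
    induction w using OnePoint.rec with
    | infty =>
      simp only [Set.mem_preimage, Set.mem_singleton_iff, toCP1_infty]
      constructor
      · intro hmem
        exfalso
        split_ifs at hmem with hgt hlt
        · exact infty_ne_coe _ hmem
        · exact h0 (coe_injective hmem).symm
        · exact hrat (coe_injective hmem).symm
      · rintro ⟨a, _, ha⟩
        exact absurd ha (coe_ne_infty a)
    | coe a =>
      simp only [Set.mem_preimage, Set.mem_singleton_iff, toCP1_coe]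
      constructor
      · intro hmem
        by_cases hva : X.denom.eval a = 0
        · rw [if_pos hva] at hmem
          exact absurd hmem (infty_ne_coe _)
        · rw [if_neg hva] at hmem
          have hdiv : X.num.eval a / X.denom.eval a = z₀ := coe_injective hmem
          refine ⟨a, ?_, rfl⟩
          simp only [Set.mem_setOf_eq]
          rw [hPeval a, sub_eq_zero, ← hdiv]
          field_simp
      · rintro ⟨b, hb, hba⟩
        have hba' : b = a := coe_injective hba
        subst hba'
        have hva := hclean b hb
        rw [if_neg hva]
        exact congrArg _ (hval b hb)
  -- injectivity of B on the fiber
  have hinj : Set.InjOn (fun a : ℂ => B.toCP1 (a : CP1)) {a : ℂ | P.eval a = 0} := by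
    intro a ha b hb hab
    simp only [Set.mem_setOf_eq] at ha hb
    simp only at hab
    have hBa : B.denom.eval a ≠ 0 := (hT a ha).2.1
    have hBb : B.denom.eval b ≠ 0 := (hT b hb).2.1
    have hBev : B.eval (RingHom.id ℂ) a = B.eval (RingHom.id ℂ) b := by
      rw [toCP1_coe, toCP1_coe, if_neg hBa, if_neg hBb] at hab
      rw [ratfunc_eval_id, ratfunc_eval_id]
      exact coe_injective hab
    have key : ∀ f : RatFunc ℂ, f ∈ Algebra.adjoin ℂ ({X, B} : Set (RatFunc ℂ)) →
        f.denom.eval a ≠ 0 ∧ f.denom.eval b ≠ 0 ∧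
          f.eval (RingHom.id ℂ) a = f.eval (RingHom.id ℂ) b := by
      intro f hf
      induction hf using Algebra.adjoin_induction with
      | mem s hs =>
        rcases hs with hs | hs
        · subst hs
          refine ⟨hclean a ha, hclean b hb, ?_⟩
          rw [ratfunc_eval_id, ratfunc_eval_id, hval a ha, hval b hb]
        · rw [Set.mem_singleton_iff] at hs
          subst hs
          exact ⟨hBa, hBb, hBev⟩
      | algebraMap c =>
        have h1 : algebraMap ℂ (RatFunc ℂ) c = algebraMap ℂ[X] (RatFunc ℂ) (Polynomial.C c) := by
          rw [IsScalarTower.algebraMap_apply ℂ ℂ[X] (RatFunc ℂ), Polynomial.algebraMap_eq]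
        rw [h1]
        refine ⟨?_, ?_, ?_⟩ <;>
          simp [RatFunc.denom_algebraMap, RatFunc.num_algebraMap, ratfunc_eval_id]
      | add x y hx hy ihx ihy =>
        obtain ⟨hxa, hxb, hxe⟩ := ihx
        obtain ⟨hya, hyb, hye⟩ := ihy
        refine ⟨eval_ne_of_dvd (RatFunc.denom_add_dvd x y) hxa hya,
          eval_ne_of_dvd (RatFunc.denom_add_dvd x y) hxb hyb, ?_⟩
        rw [RatFunc.eval_add _ _ hxa hya, RatFunc.eval_add _ _ hxb hyb, hxe, hye]
      | mul x y hx hy ihx ihy =>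
        obtain ⟨hxa, hxb, hxe⟩ := ihx
        obtain ⟨hya, hyb, hye⟩ := ihy
        refine ⟨eval_ne_of_dvd (RatFunc.denom_mul_dvd x y) hxa hya,
          eval_ne_of_dvd (RatFunc.denom_mul_dvd x y) hxb hyb, ?_⟩
        rw [RatFunc.eval_mul _ _ hxa hya, RatFunc.eval_mul _ _ hxb hyb, hxe, hye]
    obtain ⟨hqa, hqb, hqe⟩ := key q hq
    obtain ⟨hpa, hpb, hpe⟩ := key p hp
    have hXden : ∀ t : ℂ, Polynomial.eval t (RatFunc.X : RatFunc ℂ).denom ≠ 0 := by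
      intro t
      rw [RatFunc.denom_X]
      simp
    have e1 : p.eval (RingHom.id ℂ) a = a * q.eval (RingHom.id ℂ) a := by
      rw [← hzpq, RatFunc.eval_mul _ _ (hXden a) hqa, RatFunc.eval_X]
    have e2 : p.eval (RingHom.id ℂ) b = b * q.eval (RingHom.id ℂ) b := by
      rw [← hzpq, RatFunc.eval_mul _ _ (hXden b) hqb, RatFunc.eval_X]
    have hqane : q.eval (RingHom.id ℂ) a ≠ 0 := by
      rw [ratfunc_eval_id]
      exact div_ne_zero (hT a ha).2.2 hqa
    apply mul_right_cancel₀ hqane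
    rw [← e1, hpe, e2, ← hqe]
  -- counting
  have hroots : {a : ℂ | P.eval a = 0} = ↑P.roots.toFinset := by
    ext a
    simp [Multiset.mem_toFinset, Polynomial.mem_roots, hPne, Polynomial.IsRoot.def]
  rw [hfiber, Set.image_image, Set.ncard_image_of_injOn hinj, hroots, Set.ncard_coe_finset,
    Multiset.toFinset_card_of_nodup (Polynomial.nodup_roots hsep),
    Polynomial.splits_iff_card_roots.mp (IsAlgClosed.splits P), hdeg]

end Stmt0Aux

open Stmt0Aux

/-- If `X` and `B` are non-constant rational functions generating the whole field `ℂ(z)`,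
then for all but finitely many `z₀ ∈ ℂ` the set `B(X⁻¹{z₀})` contains exactly
`deg X` distinct points. -/
theorem stmt0 (X B : RatFunc ℂ) (hX : 1 ≤ X.deg) (hB : 1 ≤ B.deg)
    (hgen : IntermediateField.adjoin ℂ ({X, B} : Set (RatFunc ℂ)) = ⊤) :
    {z₀ : ℂ |
      (B.toCP1 '' (X.toCP1 ⁻¹' {((z₀ : ℂ) : CP1)})).ncard ≠ X.deg}.Finite := by
  classical
  have hzX : (RatFunc.X : RatFunc ℂ) ∈ IntermediateField.adjoin ℂ ({X, B} : Set (RatFunc ℂ)) := by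
    rw [hgen]; trivial
  rw [IntermediateField.mem_adjoin_iff] at hzX
  obtain ⟨r, s, hrs⟩ := hzX
  have hmem : ∀ t : MvPolynomial ({X, B} : Set (RatFunc ℂ)) ℂ,
      MvPolynomial.aeval Subtype.val t ∈ Algebra.adjoin ℂ ({X, B} : Set (RatFunc ℂ)) := by
    intro t
    have h1 := Algebra.adjoin_range_eq_range_aeval ℂ
      (Subtype.val : ({X, B} : Set (RatFunc ℂ)) → RatFunc ℂ)
    rw [Subtype.range_coe] at h1
    rw [h1]
    exact ⟨t, rfl⟩
  set p : RatFunc ℂ := MvPolynomial.aeval Subtype.val r with hpdef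
  set q : RatFunc ℂ := MvPolynomial.aeval Subtype.val s with hqdef
  have hq0 : q ≠ 0 := by
    intro h
    rw [h, div_zero] at hrs
    exact RatFunc.X_ne_zero hrs
  have hzpq : (RatFunc.X : RatFunc ℂ) * q = p := by
    rw [hrs]
    field_simp
  set T : Set ℂ := {t | (wron X).eval t = 0 ∨ B.denom.eval t = 0 ∨ q.num.eval t = 0} with hTdef
  have hTfin : T.Finite := by
    have h1 : T ⊆ {t | (wron X).eval t = 0} ∪ ({t | B.denom.eval t = 0} ∪
        {t | q.num.eval t = 0}) := by
      intro t ht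
      exact ht
    refine Set.Finite.subset ?_ h1
    refine Set.Finite.union ?_ (Set.Finite.union ?_ ?_)
    · exact Polynomial.finite_setOf_isRoot (wron_ne_zero hX)
    · exact Polynomial.finite_setOf_isRoot B.denom_ne_zero
    · exact Polynomial.finite_setOf_isRoot (RatFunc.num_ne_zero hq0)
  have hSfin : (insert (0 : ℂ) (insert (X.num.leadingCoeff / X.denom.leadingCoeff)
      ((fun t => X.num.eval t / X.denom.eval t) '' T))).Finite :=
    ((hTfin.image _).insert _).insert _
  refine Set.Finite.subset hSfin ?_
  intro z₀ hz₀
  simp only [Set.mem_setOf_eq] at hz₀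
  by_contra hznot
  apply hz₀
  refine good X B hX p q (hmem r) (hmem s) hq0 hzpq z₀ ?_ ?_ ?_
  · intro h
    exact hznot (by rw [h]; exact Set.mem_insert _ _)
  · intro h
    exact hznot (by rw [h]; exact Set.mem_insert_of_mem _ (Set.mem_insert _ _))
  · intro t ht heq
    refine hznot (Set.mem_insert_of_mem _ (Set.mem_insert_of_mem _ ?_))
    exact ⟨t, ht, heq.symm⟩
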